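/- Fix an integer n ≥ 2 and define Y on the unit sphere S^{n−1} ⊂ ℝⁿ by Y(u) = u₁⁴ − (6/(n+4)) u₁² + 3/((n+2)(n+4)). For t ∈ ℝ let K_t = {x ∈ ℝⁿ : ⟨x,u⟩ ≤ 1 + tY(u) for all u ∈ S^{n−1}}. Then there exists t₀ > 0 such that for all |t| ≤ t₀: K_t is a compact convex set with nonempty interior, K_t is origin-symmetric (K_t = −K_t), and its support function equals the perturbed function, i.e., sup_{x ∈ K_t} ⟨x,u⟩ = 1 + tY(u) for every u ∈ S^{n−1}. -/

import Mathlib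

open MeasureTheory Metric Set
open scoped RealInnerProductSpace

noncomputable section

/-- The fourth zonal spherical harmonic
`Y(u) = u₁⁴ − (6/(n+4)) u₁² + 3/((n+2)(n+4))`. -/
noncomputable def zonal4 (n : ℕ) (hn : 0 < n) (u : EuclideanSpace ℝ (Fin n)) : ℝ :=
  u ⟨0, hn⟩ ^ 4 - 6 / ((n : ℝ) + 4) * u ⟨0, hn⟩ ^ 2
    + 3 / (((n : ℝ) + 2) * ((n : ℝ) + 4))

/-- The body `K_t = {x : ⟨x,u⟩ ≤ 1 + tY(u) for all u ∈ S^{n-1}}`. -/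
def perturbedBody (n : ℕ) (hn : 0 < n) (t : ℝ) : Set (EuclideanSpace ℝ (Fin n)) :=
  {x | ∀ u ∈ sphere (0 : EuclideanSpace ℝ (Fin n)) 1, ⟪x, u⟫ ≤ 1 + t * zonal4 n hn u}

lemma sq_coord_le {n : ℕ} (w : EuclideanSpace ℝ (Fin n)) (i : Fin n) : (w i)^2 ≤ ‖w‖^2 := by
  have h : ‖w‖^2 = ∑ j, (w j)^2 := by
    rw [EuclideanSpace.norm_eq, Real.sq_sqrt (by positivity)]
    simp [Real.norm_eq_abs, sq_abs]
  rw [h]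
  exact Finset.single_le_sum (f := fun j => (w j)^2) (fun j _ => sq_nonneg _) (Finset.mem_univ i)

def witA (n : ℕ) : ℝ := 6 / ((n:ℝ)+4)
def witB (n : ℕ) : ℝ := 3 / (((n:ℝ)+2)*((n:ℝ)+4))

def wit (n : ℕ) (hn : 0 < n) (t : ℝ) (u : EuclideanSpace ℝ (Fin n)) : EuclideanSpace ℝ (Fin n) :=
  (1 + t * (witB n + witA n * (u ⟨0,hn⟩)^2 - 3*(u ⟨0,hn⟩)^4)) • u
    + (t * (4*(u ⟨0,hn⟩)^3 - 2*witA n*(u ⟨0,hn⟩))) • EuclideanSpace.single ⟨0,hn⟩ (1:ℝ)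

lemma inner_wit {n : ℕ} (hn : 0 < n) (t : ℝ) (u v : EuclideanSpace ℝ (Fin n)) :
    ⟪wit n hn t u, v⟫ = (1 + t * (witB n + witA n * (u ⟨0,hn⟩)^2 - 3*(u ⟨0,hn⟩)^4)) * ⟪u,v⟫
      + (t * (4*(u ⟨0,hn⟩)^3 - 2*witA n*(u ⟨0,hn⟩))) * v ⟨0,hn⟩ := by
  simp [wit, inner_add_left, real_inner_smul_left, EuclideanSpace.inner_single_left, Finset.mul_sum, mul_assoc]

lemma witA_bounds {n : ℕ} (hn2 : 2 ≤ n) : 0 ≤ witA n ∧ witA n ≤ 1 := by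
  have h : (2:ℝ) ≤ (n:ℝ) := by exact_mod_cast hn2
  constructor
  · unfold witA; positivity
  · rw [witA, div_le_one (by linarith)]; linarith

lemma witB_bounds {n : ℕ} (hn2 : 2 ≤ n) : 0 ≤ witB n ∧ witB n ≤ 1/8 := by
  have h : (2:ℝ) ≤ (n:ℝ) := by exact_mod_cast hn2
  constructor
  · unfold witB; positivity
  · rw [witB, div_le_iff₀ (by nlinarith)]; nlinarith


lemma real_key {a b t p q s : ℝ} (hA0 : 0 ≤ a) (hA1 : a ≤ 1) (hB0 : 0 ≤ b) (hB1 : b ≤ 1/8)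
    (ht1 : -(1/100) ≤ t) (ht2 : t ≤ 1/100) (hp2 : p^2 ≤ 1) (hq2 : q^2 ≤ 1) (hs1 : s ≤ 1)
    (hd : (p - q)^2 ≤ 2*(1-s)) :
    (1 + t * (b + a * p^2 - 3*p^4)) * s + (t * (4*p^3 - 2*a*p)) * q
      ≤ 1 + t * (q^4 - a*q^2 + b) := by
  have hr : 0 ≤ 1 - s := by linarith
  have hp4 : p^4 ≤ 1 := by nlinarith [sq_nonneg p]
  have h6 : (q+p)^2 + 2*p^2 ≤ 6 := by nlinarith
  have hw0 : 0 ≤ (q-p)^2 := sq_nonneg _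
  have hw2 : (q-p)^2 ≤ 2*(1-s) := by nlinarith [hd]
  have t1 : ((q+p)^2 + 2*p^2) * (q-p)^2 ≤ 6 * (2*(1-s)) :=
    mul_le_mul h6 hw2 hw0 (by norm_num)
  have t1' : 0 ≤ ((q+p)^2 + 2*p^2) * (q-p)^2 := mul_nonneg (by positivity) hw0
  have t2 : 0 ≤ a*(q-p)^2 := mul_nonneg hA0 hw0
  have t2' : a*(q-p)^2 ≤ 2*(1-s) := by
    calc a*(q-p)^2 ≤ 1*(q-p)^2 := mul_le_mul_of_nonneg_right hA1 hw0
    _ ≤ 2*(1-s) := by linarith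
  have hap : a * p^2 ≤ 1 := by
    calc a * p^2 ≤ 1 * 1 := mul_le_mul hA1 hp2 (sq_nonneg p) (by norm_num)
    _ = 1 := by norm_num
  have hap0 : 0 ≤ a * p^2 := mul_nonneg hA0 (sq_nonneg p)
  have hc1 : b + a*p^2 - 3*p^4 ≤ 2 := by nlinarith [sq_nonneg (p^2)]
  have hc2 : (-3:ℝ) ≤ b + a*p^2 - 3*p^4 := by nlinarith
  have t3 : (b + a*p^2 - 3*p^4)*(1-s) ≤ 2*(1-s) := mul_le_mul_of_nonneg_right hc1 hr
  have t3' : (-3)*(1-s) ≤ (b + a*p^2 - 3*p^4)*(1-s) := mul_le_mul_of_nonneg_right hc2 hr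
  have hEupp : q^4 - a*q^2 + b - (4*p^3-2*a*p)*q - (b + a*p^2 - 3*p^4)*s ≤ 14*(1-s) := by
    linarith [t1, t2, t3]
  have hElow : -(5*(1-s)) ≤ q^4 - a*q^2 + b - (4*p^3-2*a*p)*q - (b + a*p^2 - 3*p^4)*s := by
    linarith [t1', t2', t3']
  have hfinal : 0 ≤ (1 - s) + t * (q^4 - a*q^2 + b - (4*p^3-2*a*p)*q - (b + a*p^2 - 3*p^4)*s) := by
    rcases le_or_gt 0 t with h0 | h0
    · have h1 : t * (-(5*(1-s))) ≤ t * (q^4 - a*q^2 + b - (4*p^3-2*a*p)*q - (b + a*p^2 - 3*p^4)*s) := mul_le_mul_of_nonneg_left hElow h0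
      have h2 : t * (1-s) ≤ (1/100) * (1-s) := mul_le_mul_of_nonneg_right ht2 hr
      linarith [h1, h2]
    · have h1 : t * (14*(1-s)) ≤ t * (q^4 - a*q^2 + b - (4*p^3-2*a*p)*q - (b + a*p^2 - 3*p^4)*s) := mul_le_mul_of_nonpos_left hEupp h0.le
      have h2 : (-(1/100)) * (1-s) ≤ t * (1-s) := mul_le_mul_of_nonneg_right ht1 hr
      linarith [h1, h2]
  linarith [hfinal]

lemma key_ineq {n : ℕ} (hn : 0 < n) (hn2 : 2 ≤ n) {t : ℝ} (ht : |t| ≤ 1/100)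
    {u v : EuclideanSpace ℝ (Fin n)} (hu : ‖u‖ = 1) (hv : ‖v‖ = 1) :
    ⟪wit n hn t u, v⟫ ≤ 1 + t * zonal4 n hn v := by
  obtain ⟨hA0, hA1⟩ := witA_bounds (n := n) hn2
  obtain ⟨hB0, hB1⟩ := witB_bounds (n := n) hn2
  obtain ⟨ht1, ht2⟩ := abs_le.mp ht
  rw [inner_wit]
  have hzon : zonal4 n hn v = (v ⟨0,hn⟩)^4 - witA n * (v ⟨0,hn⟩)^2 + witB n := by
    rw [zonal4, witA, witB]
  rw [hzon]
  have hp2 : (u ⟨0,hn⟩)^2 ≤ 1 := by have := sq_coord_le u ⟨0,hn⟩; rwa [hu, one_pow] at this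
  have hq2 : (v ⟨0,hn⟩)^2 ≤ 1 := by have := sq_coord_le v ⟨0,hn⟩; rwa [hv, one_pow] at this
  have hs1 : (⟪u,v⟫ : ℝ) ≤ 1 := by
    have := real_inner_le_norm u v
    rwa [hu, hv, one_mul] at this
  have hd : (u ⟨0,hn⟩ - v ⟨0,hn⟩)^2 ≤ 2*(1-(⟪u,v⟫ : ℝ)) := by
    have h1 : ((u - v) ⟨0,hn⟩)^2 ≤ ‖u - v‖^2 := sq_coord_le _ _
    have h2 : ‖u - v‖^2 = 2 - 2*(⟪u,v⟫ : ℝ) := by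
      rw [norm_sub_sq_real, hu, hv]; ring
    have h3 : (u - v) ⟨0,hn⟩ = u ⟨0,hn⟩ - v ⟨0,hn⟩ := rfl
    rw [h3, h2] at h1; linarith
  exact real_key hA0 hA1 hB0 hB1 ht1 ht2 hp2 hq2 hs1 hd

lemma zonal4_abs_le {n : ℕ} (hn : 0 < n) (hn2 : 2 ≤ n) {u : EuclideanSpace ℝ (Fin n)}
    (hu : ‖u‖ = 1) : |zonal4 n hn u| ≤ 3 := by
  obtain ⟨hA0, hA1⟩ := witA_bounds (n := n) hn2
  obtain ⟨hB0, hB1⟩ := witB_bounds (n := n) hn2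
  have hp2 : (u ⟨0,hn⟩)^2 ≤ 1 := by have := sq_coord_le u ⟨0,hn⟩; rwa [hu, one_pow] at this
  have hp4 : (u ⟨0,hn⟩)^4 ≤ 1 := by nlinarith [sq_nonneg (u ⟨0,hn⟩)]
  have hp40 : 0 ≤ (u ⟨0,hn⟩)^4 := by positivity
  have hap : witA n * (u ⟨0,hn⟩)^2 ≤ 1 :=
    le_trans (mul_le_mul hA1 hp2 (sq_nonneg _) (by norm_num)) (by norm_num)
  have hap0 : 0 ≤ witA n * (u ⟨0,hn⟩)^2 := mul_nonneg hA0 (sq_nonneg _)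
  have hzon : zonal4 n hn u = (u ⟨0,hn⟩)^4 - witA n * (u ⟨0,hn⟩)^2 + witB n := by
    rw [zonal4, witA, witB]
  rw [hzon, abs_le]
  constructor <;> linarith

lemma wit_mem {n : ℕ} (hn : 0 < n) (hn2 : 2 ≤ n) {t : ℝ} (ht : |t| ≤ 1/100)
    {u : EuclideanSpace ℝ (Fin n)} (hu : ‖u‖ = 1) :
    wit n hn t u ∈ perturbedBody n hn t := by
  intro v hv
  rw [mem_sphere_zero_iff_norm] at hv
  exact key_ineq hn hn2 ht hu hv

lemma inner_wit_self {n : ℕ} (hn : 0 < n) (t : ℝ) {u : EuclideanSpace ℝ (Fin n)}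
    (hu : ‖u‖ = 1) : ⟪wit n hn t u, u⟫ = 1 + t * zonal4 n hn u := by
  rw [inner_wit]
  have h1 : (⟪u,u⟫ : ℝ) = 1 := by
    rw [real_inner_self_eq_norm_sq, hu]; norm_num
  rw [h1, zonal4, witA, witB]
  ring

lemma body_closed {n : ℕ} (hn : 0 < n) (t : ℝ) : IsClosed (perturbedBody n hn t) := by
  have heq : perturbedBody n hn t =
      ⋂ u ∈ sphere (0 : EuclideanSpace ℝ (Fin n)) 1,
        {x : EuclideanSpace ℝ (Fin n) | ⟪x, u⟫ ≤ 1 + t * zonal4 n hn u} := by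
    ext x; simp [perturbedBody]
  rw [heq]
  exact isClosed_biInter fun u _ =>
    isClosed_le (Continuous.inner continuous_id continuous_const) continuous_const

lemma body_subset {n : ℕ} (hn : 0 < n) (hn2 : 2 ≤ n) {t : ℝ} (ht : |t| ≤ 1/100) :
    perturbedBody n hn t ⊆ closedBall (0 : EuclideanSpace ℝ (Fin n)) 2 := by
  intro x hx
  rw [mem_closedBall, dist_zero_right]
  by_cases hx0 : x = 0
  · simp [hx0]
  · have hxn : 0 < ‖x‖ := norm_pos_iff.mpr hx0
    set u : EuclideanSpace ℝ (Fin n) := ‖x‖⁻¹ • x with hu'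
    have hu : ‖u‖ = 1 := by
      rw [hu', norm_smul, norm_inv, norm_norm, inv_mul_cancel₀ hxn.ne']
    have hmem := hx u (by rwa [mem_sphere_zero_iff_norm])
    have hiu : (⟪x, u⟫ : ℝ) = ‖x‖ := by
      rw [hu', real_inner_smul_right, real_inner_self_eq_norm_sq]
      field_simp
    have hz := zonal4_abs_le hn hn2 hu
    have := abs_le.mp hz
    have htz : t * zonal4 n hn u ≤ 1 := by
      obtain ⟨ht1, ht2⟩ := abs_le.mp ht
      calc t * zonal4 n hn u ≤ |t * zonal4 n hn u| := le_abs_self _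
      _ = |t| * |zonal4 n hn u| := abs_mul _ _
      _ ≤ (1/100) * 3 := by
          apply mul_le_mul ht hz (abs_nonneg _) (by norm_num)
      _ ≤ 1 := by norm_num
    rw [hiu] at hmem
    linarith

lemma body_convex {n : ℕ} (hn : 0 < n) (t : ℝ) : Convex ℝ (perturbedBody n hn t) := by
  intro x hx y hy α β hα hβ hαβ
  intro u hu
  have h1 := hx u hu
  have h2 := hy u hu
  have hinner : (⟪α • x + β • y, u⟫ : ℝ) = α * ⟪x,u⟫ + β * ⟪y,u⟫ := by
    rw [inner_add_left, real_inner_smul_left, real_inner_smul_left]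
  rw [hinner]
  calc α * ⟪x,u⟫ + β * ⟪y,u⟫
      ≤ α * (1 + t * zonal4 n hn u) + β * (1 + t * zonal4 n hn u) := by
        gcongr
    _ = 1 + t * zonal4 n hn u := by rw [← add_mul, hαβ]; ring

lemma body_interior {n : ℕ} (hn : 0 < n) (hn2 : 2 ≤ n) {t : ℝ} (ht : |t| ≤ 1/100) :
    (0 : EuclideanSpace ℝ (Fin n)) ∈ interior (perturbedBody n hn t) := by
  rw [mem_interior]
  refine ⟨ball 0 (1/2), ?_, isOpen_ball, mem_ball_self (by norm_num)⟩
  intro x hx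
  rw [mem_ball, dist_zero_right] at hx
  intro u hu
  rw [mem_sphere_zero_iff_norm] at hu
  have h1 : (⟪x, u⟫ : ℝ) ≤ ‖x‖ := by
    have := real_inner_le_norm x u
    rwa [hu, mul_one] at this
  have hz := zonal4_abs_le hn hn2 hu
  obtain ⟨hz1, hz2⟩ := abs_le.mp hz
  have htz : -(1:ℝ)/2 ≤ t * zonal4 n hn u := by
    have : |t * zonal4 n hn u| ≤ (1/100) * 3 := by
      rw [abs_mul]
      exact mul_le_mul ht hz (abs_nonneg _) (by norm_num)
    have := (abs_le.mp this).1
    linarith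
  linarith

lemma body_symm {n : ℕ} (hn : 0 < n) (t : ℝ) :
    perturbedBody n hn t = -perturbedBody n hn t := by
  have key : ∀ x ∈ perturbedBody n hn t, -x ∈ perturbedBody n hn t := by
    intro x hx u hu
    have hmu : -u ∈ sphere (0 : EuclideanSpace ℝ (Fin n)) 1 := by
      rw [mem_sphere_zero_iff_norm] at hu ⊢
      rw [norm_neg]; exact hu
    have h := hx (-u) hmu
    have h1 : (⟪-x, u⟫ : ℝ) = ⟪x, -u⟫ := by
      rw [inner_neg_left, inner_neg_right]
    have h2 : zonal4 n hn (-u) = zonal4 n hn u := by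
      have : (-u) ⟨0,hn⟩ = -(u ⟨0,hn⟩) := rfl
      rw [zonal4, zonal4, this]; ring
    rw [h1]
    rw [h2] at h
    exact h
  ext x
  constructor
  · intro hx
    rw [Set.mem_neg]
    exact key x hx
  · intro hx
    rw [Set.mem_neg] at hx
    have := key _ hx
    rwa [neg_neg] at this

/-- For all sufficiently small `t`, the perturbed body `K_t` is an origin-symmetric
convex body whose support function is `1 + tY`. -/
theorem perturbedBody_is_body (n : ℕ) (hn : 2 ≤ n) :
    ∃ t₀ > (0 : ℝ), ∀ t : ℝ, |t| ≤ t₀ →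
      IsCompact (perturbedBody n (by omega) t) ∧
      Convex ℝ (perturbedBody n (by omega) t) ∧
      (interior (perturbedBody n (by omega) t)).Nonempty ∧
      perturbedBody n (by omega) t = -perturbedBody n (by omega) t ∧
      ∀ u ∈ sphere (0 : EuclideanSpace ℝ (Fin n)) 1,
        sSup ((fun x => ⟪x, u⟫) '' perturbedBody n (by omega) t) =
          1 + t * zonal4 n (by omega) u := by
  have hn0 : 0 < n := by omega
  refine ⟨1/100, by norm_num, fun t ht => ?_⟩
  refine ⟨?_, body_convex _ _, ⟨0, body_interior _ hn ht⟩, body_symm _ _, ?_⟩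
  · exact (isCompact_closedBall _ 2).of_isClosed_subset (body_closed _ t)
      (body_subset _ hn ht)
  · intro u hu
    have hun : ‖u‖ = 1 := mem_sphere_zero_iff_norm.mp hu
    have hwit : wit n hn0 t u ∈ perturbedBody n hn0 t := wit_mem hn0 hn ht hun
    apply le_antisymm
    · refine csSup_le ⟨_, ⟨wit n hn0 t u, hwit, rfl⟩⟩ ?_
      rintro x ⟨y, hy, rfl⟩
      exact hy u hu
    · refine le_csSup ⟨1 + t * zonal4 n hn0 u, ?_⟩ ?_
      · rintro x ⟨y, hy, rfl⟩
        exact hy u hu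
      · exact ⟨wit n hn0 t u, hwit, inner_wit_self hn0 t hun⟩

end
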